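/- arXiv:2602.17602 — 2 statements merged into one kernel-verified Lean document; each statement's English description precedes it below -/
import Mathlib

section
/- Let Q⁽¹⁾, Q⁽²⁾ ∈ ℝ^{D×D} satisfy (Q⁽¹⁾)² = Q⁽¹⁾, (Q⁽²⁾)² = Q⁽²⁾, and Q⁽¹⁾Q⁽²⁾ = Q⁽²⁾Q⁽¹⁾ = Q⁽²⁾. Let α, β : [0,1] → ℝ with α(0) = β(0) = 1 and α, β nonvanishing on [0,1). Define for s ≤ t with s,t ∈ [0,1): Q_{t|s} := (α(t)/α(s))·I + (β(t)/β(s) − α(t)/α(s))·Q⁽¹⁾ + (1 − β(t)/β(s))·Q⁽²⁾. Then for all 0 ≤ r ≤ s ≤ t < 1, Q_{t|s} · Q_{s|r} = Q_{t|r}, and in particular Q_{t|0} = α(t)·I + (β(t) − α(t))·Q⁽¹⁾ + (1 − β(t))·Q⁽²⁾. -/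
/-- Lemma 1, closed-form HDDM forward process:
for projections `Q⁽¹⁾, Q⁽²⁾` with `Q⁽¹⁾Q⁽²⁾ = Q⁽²⁾Q⁽¹⁾ = Q⁽²⁾` and schedules
`α, β` with `α(0) = β(0) = 1`, nonvanishing on `[0,1)`, the kernels
`Q_{t|s} = (α t/α s)•I + (β t/β s − α t/α s)•Q⁽¹⁾ + (1 − β t/β s)•Q⁽²⁾`
satisfy Chapman–Kolmogorov `Q_{t|s} Q_{s|r} = Q_{t|r}` for `0 ≤ r ≤ s ≤ t < 1`,
and `Q_{t|0} = α t • I + (β t − α t)•Q⁽¹⁾ + (1 − β t)•Q⁽²⁾`. -/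
theorem hddm_chapman_kolmogorov {D : ℕ}
    (Q1 Q2 : Matrix (Fin D) (Fin D) ℝ)
    (h1 : Q1 * Q1 = Q1) (h2 : Q2 * Q2 = Q2)
    (h12 : Q1 * Q2 = Q2) (h21 : Q2 * Q1 = Q2)
    (α β : ℝ → ℝ)
    (hα0 : α 0 = 1) (hβ0 : β 0 = 1)
    (hα : ∀ t, 0 ≤ t → t < 1 → α t ≠ 0)
    (hβ : ∀ t, 0 ≤ t → t < 1 → β t ≠ 0)
    (Qk : ℝ → ℝ → Matrix (Fin D) (Fin D) ℝ)
    (hQk : ∀ t s, Qk t s =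
      (α t / α s) • (1 : Matrix (Fin D) (Fin D) ℝ)
        + (β t / β s - α t / α s) • Q1 + (1 - β t / β s) • Q2) :
    (∀ r s t, 0 ≤ r → r ≤ s → s ≤ t → t < 1 → Qk t s * Qk s r = Qk t r) ∧
    (∀ t, 0 ≤ t → t < 1 → Qk t 0 =
      α t • (1 : Matrix (Fin D) (Fin D) ℝ) + (β t - α t) • Q1 + (1 - β t) • Q2) := by
  constructor
  · intro r s t hr hrs hst ht
    have hs1 : s < 1 := lt_of_le_of_lt hst ht
    have hr1 : r < 1 := lt_of_le_of_lt hrs hs1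
    have hαs := hα s (hr.trans hrs) hs1
    have hβs := hβ s (hr.trans hrs) hs1
    have hαr := hα r hr hr1
    have hβr := hβ r hr hr1
    have ha : α t / α s * (α s / α r) = α t / α r := by field_simp
    have hb : β t / β s * (β s / β r) = β t / β r := by field_simp
    rw [hQk, hQk, hQk]
    simp only [add_mul, mul_add, Matrix.smul_mul, Matrix.mul_smul, smul_smul,
      Matrix.one_mul, Matrix.mul_one, h1, h2, h12, h21]
    match_scalars
    · linear_combination ha
    · linear_combination hb - ha
    · linear_combination -hb
  · intro t ht0 ht1
    rw [hQk]
    rw [hα0, hβ0]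
    norm_num
end

section
/- Let Q⁽¹⁾, ..., Q⁽ⁿ⁾ ∈ ℝ^{D×D} satisfy Q⁽ⁱ⁾ Q⁽ʲ⁾ = Q⁽ᵐᵃˣ⁽ⁱ'ʲ⁾⁾ for all 1 ≤ i, j ≤ n. Let α⁽¹⁾, ..., α⁽ⁿ⁾ : [0,1) → ℝ≥0 be nonvanishing functions with α⁽ⁱ⁾(0) = 1. Define for s ≤ t: Q_{t|s} := (α⁽¹⁾(t)/α⁽¹⁾(s))·I + Σ_{i=1}^{n−1} (α⁽ⁱ⁺¹⁾(t)/α⁽ⁱ⁺¹⁾(s) − α⁽ⁱ⁾(t)/α⁽ⁱ⁾(s))·Q⁽ⁱ⁾ + (1 − α⁽ⁿ⁾(t)/α⁽ⁿ⁾(s))·Q⁽ⁿ⁾. Then Q_{t|s} Q_{s|r} = Q_{t|r} for all 0 ≤ r ≤ s ≤ t < 1. -/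
/-!
Extend the flag by `Q⁽⁰⁾ = 1` and `Q⁽ⁿ⁺¹⁾ = 0`. The relation `Q⁽ⁱ⁾Q⁽ʲ⁾ = Q⁽ᵐᵃˣ⁽ⁱ,ʲ⁾⁾` makes the
differences `Eᵢ = Q⁽ⁱ⁾ - Q⁽ⁱ⁺¹⁾`, `0 ≤ i ≤ n`, orthogonal idempotents, and summation by parts
writes `Q_{t|s} = ∑ᵢ (α⁽ⁱ⁺¹⁾(t)/α⁽ⁱ⁺¹⁾(s)) Eᵢ`, with the ratio read as `1` for `i = n`.
Such combinations multiply coefficientwise, and the ratios telescope: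
`(α(t)/α(s)) (α(s)/α(r)) = α(t)/α(r)`.
-/

open Finset

theorem sum_range_smul_sub_succ {𝕜 M : Type*} [Ring 𝕜] [AddCommGroup M] [Module 𝕜 M]
    (c : ℕ → 𝕜) (g : ℕ → M) (n : ℕ) :
    ∑ i ∈ range (n + 1), c i • (g i - g (i + 1)) =
      c 0 • g 0 + ∑ i ∈ range n, (c (i + 1) - c i) • g (i + 1) - c n • g (n + 1) := by
  induction n with
  | zero => simp [smul_sub]
  | succ n ih =>
    rw [sum_range_succ, ih, sum_range_succ]
    simp only [sub_smul, smul_sub]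
    abel

section Flag

variable {R : Type*} [Ring R]

def extendFlag (n : ℕ) (Q : ℕ → R) (i : ℕ) : R :=
  if i = 0 then 1 else if i ≤ n then Q i else 0

theorem extendFlag_mul_extendFlag {n : ℕ} {Q : ℕ → R}
    (hQ : ∀ i j, 1 ≤ i → i ≤ n → 1 ≤ j → j ≤ n → Q i * Q j = Q (max i j)) (i j : ℕ) :
    extendFlag n Q i * extendFlag n Q j = extendFlag n Q (max i j) := by
  unfold extendFlag
  rcases Nat.eq_zero_or_pos i with rfl | hi
  · simp
  rcases Nat.eq_zero_or_pos j with rfl | hj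
  · simp
  have hij : max i j ≠ 0 := by omega
  by_cases hin : i ≤ n <;> by_cases hjn : j ≤ n
  · simp [hi.ne', hj.ne', hij, hin, hjn, hQ i j hi hin hj hjn]
  all_goals simp [hi.ne', hj.ne', hij, hin, hjn]

theorem orthogonalIdempotents_sub_succ {P : ℕ → R} (hP : ∀ i j, P i * P j = P (max i j)) :
    OrthogonalIdempotents fun i => P i - P (i + 1) := by
  refine OrthogonalIdempotents.iff_mul_eq.2 fun i j => ?_
  simp only [sub_mul, mul_sub, hP]
  rcases lt_trichotomy i j with h | rfl | h
  · rw [if_neg h.ne, max_eq_right h.le, max_eq_right (by omega : i ≤ j + 1),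
      max_eq_right (by omega : i + 1 ≤ j), max_eq_right (by omega : i + 1 ≤ j + 1)]
    abel
  · simp
  · rw [if_neg h.ne', max_eq_left h.le, max_eq_left (by omega : j + 1 ≤ i),
      max_eq_left (by omega : j ≤ i + 1), max_eq_left (by omega : j + 1 ≤ i + 1)]
    abel

end Flag

theorem OrthogonalIdempotents.sum_smul_mul_sum_smul {𝕜 R ι : Type*} [CommSemiring 𝕜] [Semiring R]
    [Algebra 𝕜 R] {e : ι → R} (he : OrthogonalIdempotents e) (s : Finset ι) (c d : ι → 𝕜) :
    (∑ i ∈ s, c i • e i) * ∑ i ∈ s, d i • e i = ∑ i ∈ s, (c i * d i) • e i := by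
  classical
  simp [sum_mul_sum, he.mul_eq, smul_smul, mul_comm]

section Kernel

variable {𝕜 R T : Type*} [Field 𝕜] [Ring R] [Algebra 𝕜 R]

def levelRatio (n : ℕ) (α : ℕ → T → 𝕜) (u v : T) (k : ℕ) : 𝕜 :=
  if k ≤ n then α k u / α k v else 1

theorem levelRatio_mul_levelRatio {n : ℕ} {α : ℕ → T → 𝕜} {t s r : T}
    (hs : ∀ k, 1 ≤ k → k ≤ n → α k s ≠ 0) {k : ℕ} (hk : 1 ≤ k) :
    levelRatio n α t s k * levelRatio n α s r k = levelRatio n α t r k := by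
  unfold levelRatio
  split_ifs with hkn
  · exact div_mul_div_cancel₀ (hs k hk hkn)
  · exact one_mul 1

def forwardKernel (n : ℕ) (Q : ℕ → R) (α : ℕ → T → 𝕜) (u v : T) : R :=
  (α 1 u / α 1 v) • (1 : R) + ∑ i ∈ Ico 1 n, (α (i + 1) u / α (i + 1) v - α i u / α i v) • Q i
    + (1 - α n u / α n v) • Q n

theorem forwardKernel_eq_sum_levelRatio_smul {n : ℕ} (hn : 1 ≤ n)
    (Q : ℕ → R) (α : ℕ → T → 𝕜) (u v : T) :
    forwardKernel n Q α u v =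
      ∑ i ∈ range (n + 1),
        levelRatio n α u v (i + 1) • (extendFlag n Q i - extendFlag n Q (i + 1)) := by
  rw [forwardKernel,
    sum_range_smul_sub_succ (fun i => levelRatio n α u v (i + 1)) (extendFlag n Q), range_eq_Ico,
    sum_Ico_add' (fun k => (levelRatio n α u v (k + 1) - levelRatio n α u v k) • extendFlag n Q k),
    zero_add, sum_Ico_succ_top hn]
  have hmid : ∀ k ∈ Ico 1 n, (levelRatio n α u v (k + 1) - levelRatio n α u v k) • extendFlag n Q k
      = (α (k + 1) u / α (k + 1) v - α k u / α k v) • Q k := by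
    intro k hk
    obtain ⟨hk1, hkn⟩ := mem_Ico.1 hk
    simp [levelRatio, extendFlag, hkn.le, Nat.succ_le_of_lt hkn, Nat.pos_iff_ne_zero.1 hk1]
  rw [sum_congr rfl hmid]
  simp [levelRatio, extendFlag, hn, Nat.pos_iff_ne_zero.1 hn, add_assoc]

theorem forwardKernel_mul_forwardKernel {n : ℕ} (hn : 1 ≤ n) {Q : ℕ → R}
    (hQ : ∀ i j, 1 ≤ i → i ≤ n → 1 ≤ j → j ≤ n → Q i * Q j = Q (max i j))
    {α : ℕ → T → 𝕜} {t s r : T} (hs : ∀ k, 1 ≤ k → k ≤ n → α k s ≠ 0) :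
    forwardKernel n Q α t s * forwardKernel n Q α s r = forwardKernel n Q α t r := by
  simp only [forwardKernel_eq_sum_levelRatio_smul hn]
  rw [(orthogonalIdempotents_sub_succ (extendFlag_mul_extendFlag hQ)).sum_smul_mul_sum_smul]
  exact sum_congr rfl fun i _ => by rw [levelRatio_mul_levelRatio hs i.succ_pos]

end Kernel

theorem hddm_multilevel_chapman_kolmogorov_general {D n : ℕ} (hn : 1 ≤ n)
    (Q : ℕ → Matrix (Fin D) (Fin D) ℝ)
    (hQ : ∀ i j, 1 ≤ i → i ≤ n → 1 ≤ j → j ≤ n → Q i * Q j = Q (max i j))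
    (α : ℕ → ℝ → ℝ)
    (hα_ne : ∀ i, 1 ≤ i → i ≤ n → ∀ t, 0 ≤ t → t < 1 → α i t ≠ 0)
    (Qk : ℝ → ℝ → Matrix (Fin D) (Fin D) ℝ)
    (hQk : ∀ t s, Qk t s =
      (α 1 t / α 1 s) • (1 : Matrix (Fin D) (Fin D) ℝ)
        + ∑ i ∈ Finset.Ico 1 n, (α (i + 1) t / α (i + 1) s - α i t / α i s) • Q i
        + (1 - α n t / α n s) • Q n) :
    ∀ r s t, 0 ≤ r → r ≤ s → s ≤ t → t < 1 → Qk t s * Qk s r = Qk t r := by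
  intro r s t hr hrs hst ht1
  simp only [hQk]
  exact forwardKernel_mul_forwardKernel hn hQ fun k hk hkn =>
    hα_ne k hk hkn s (hr.trans hrs) (hst.trans_lt ht1)

/-- generalized multi-level HDDM forward process, Proposition 1:
given operators `Q⁽¹⁾, ..., Q⁽ⁿ⁾` with `Q⁽ⁱ⁾Q⁽ʲ⁾ = Q⁽ᵐᵃˣ⁽ⁱ,ʲ⁾⁾` and nonvanishing
nonnegative schedules `α⁽ⁱ⁾` on `[0,1)` with `α⁽ⁱ⁾(0) = 1`, the kernels
`Q_{t|s} = (α⁽¹⁾t/α⁽¹⁾s)•I + Σᵢ (α⁽ⁱ⁺¹⁾t/α⁽ⁱ⁺¹⁾s − α⁽ⁱ⁾t/α⁽ⁱ⁾s)•Q⁽ⁱ⁾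
          + (1 − α⁽ⁿ⁾t/α⁽ⁿ⁾s)•Q⁽ⁿ⁾`
satisfy `Q_{t|s} Q_{s|r} = Q_{t|r}` for all `0 ≤ r ≤ s ≤ t < 1`. -/
theorem hddm_multilevel_chapman_kolmogorov {D n : ℕ} (hn : 1 ≤ n)
    (Q : ℕ → Matrix (Fin D) (Fin D) ℝ)
    (hQ : ∀ i j, 1 ≤ i → i ≤ n → 1 ≤ j → j ≤ n → Q i * Q j = Q (max i j))
    (α : ℕ → ℝ → ℝ)
    (hα0 : ∀ i, 1 ≤ i → i ≤ n → α i 0 = 1)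
    (hα_nonneg : ∀ i, 1 ≤ i → i ≤ n → ∀ t, 0 ≤ t → t < 1 → 0 ≤ α i t)
    (hα_ne : ∀ i, 1 ≤ i → i ≤ n → ∀ t, 0 ≤ t → t < 1 → α i t ≠ 0)
    (Qk : ℝ → ℝ → Matrix (Fin D) (Fin D) ℝ)
    (hQk : ∀ t s, Qk t s =
      (α 1 t / α 1 s) • (1 : Matrix (Fin D) (Fin D) ℝ)
        + ∑ i ∈ Finset.Ico 1 n, (α (i + 1) t / α (i + 1) s - α i t / α i s) • Q i
        + (1 - α n t / α n s) • Q n) :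
    ∀ r s t, 0 ≤ r → r ≤ s → s ≤ t → t < 1 → Qk t s * Qk s r = Qk t r :=
  hddm_multilevel_chapman_kolmogorov_general hn Q hQ α hα_ne Qk hQk
end
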